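/- arXiv:2106.07072 — 2 statements merged into one kernel-verified Lean document; each statement's English description precedes it below -/
import Mathlib

section
/- Let k ≥ 2 and let H be a k-uniform hypergraph. Then H admits a rainbow-free k-colouring if and only if there exists a non-empty proper subset S ⊊ V(H) such that the induced (k-1)-uniform hypergraph H_S admits a rainbow-free (k-1)-colouring. Moreover, in this case there is a rainbow-free k-colouring c of H with c⁻¹(k) = S. -/
/-!
With `k + 1` colours on a `(k + 1)`-element edge, an edge is rainbow exactly when it is coloured
injectively. Colouring `S` with the last colour and `V \ S` by a colouring `c'` of `H_S`, an edge
meeting `S` in two or more vertices therefore cannot be rainbow, one missing `S` misses the last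
colour, and one meeting `S` in a single vertex `w` is rainbow iff its trace `e \ {w}` in `H_S` is
rainbow under `c'`. Conversely a rainbow-free colouring of `H` is of this form with `S` its last
colour class, which is non-empty, and proper since `k ≥ 1`, by surjectivity.
-/

open Finset

/-- A `k`-uniform hypergraph on a vertex type `α`. -/
structure UniformHypergraph (α : Type*) [DecidableEq α] (k : ℕ) where
  verts : Finset α
  edges : Finset (Finset α)
  edge_sub : ∀ e ∈ edges, e ⊆ verts
  edge_card : ∀ e ∈ edges, e.card = k

variable {α : Type*} [DecidableEq α]

/-- The induced `k`-uniform subhypergraph `H_S` of a `(k+1)`-uniform hypergraph. -/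
def UniformHypergraph.induced {k : ℕ} (H : UniformHypergraph α (k + 1)) (S : Finset α) :
    UniformHypergraph α k where
  verts := H.verts \ S
  edges := (H.edges.filter fun e => (e ∩ S).card = 1).image fun e => e \ S
  edge_sub := by
    intro e he
    simp only [mem_image, mem_filter] at he
    obtain ⟨f, ⟨hf, _⟩, rfl⟩ := he
    exact sdiff_subset_sdiff (H.edge_sub f hf) le_rfl
  edge_card := by
    intro e he
    simp only [mem_image, mem_filter] at he
    obtain ⟨f, ⟨hf, hf1⟩, rfl⟩ := he
    have h := Finset.card_sdiff_add_card_inter f S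
    have h2 := H.edge_card f hf
    omega

/-- A rainbow-free `k`-colouring: surjective onto the colours (on the vertex set)
and no hyperedge attains all `k` colours. -/
def IsRainbowFree {k : ℕ} (H : UniformHypergraph α k) (c : α → Fin k) : Prop :=
  (∀ i : Fin k, ∃ v ∈ H.verts, c v = i) ∧ ∀ e ∈ H.edges, e.image c ≠ Finset.univ

theorem Finset.image_eq_univ_iff_injOn_of_card_eq {ι β : Type*} [Fintype β] [DecidableEq β]
    {e : Finset ι} {c : ι → β} (he : e.card = Fintype.card β) :
    e.image c = univ ↔ Set.InjOn c e := by
  rw [← card_image_iff, he]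
  exact ⟨fun h => by rw [h, card_univ], eq_univ_of_card _⟩

namespace UniformHypergraph

variable {k : ℕ}

theorem induced_verts (H : UniformHypergraph α (k + 1)) (S : Finset α) :
    (H.induced S).verts = H.verts \ S :=
  rfl

theorem mem_induced_edges {H : UniformHypergraph α (k + 1)} {S e : Finset α} :
    e ∈ (H.induced S).edges ↔ ∃ f ∈ H.edges, (f ∩ S).card = 1 ∧ f \ S = e := by
  simp only [induced, mem_image, mem_filter, and_assoc]

end UniformHypergraph

open UniformHypergraph

section Colourings

variable {k : ℕ}

def extendColouring (S : Finset α) (c' : α → Fin k) (v : α) : Fin (k + 1) :=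
  if v ∈ S then Fin.last k else (c' v).castSucc

-- `j₀` is an arbitrary value on the last colour class, which `H_S` does not contain.
def lowerColouring {ι : Type*} (j₀ : Fin k) (c : ι → Fin (k + 1)) (i : ι) : Fin k :=
  if h : c i = Fin.last k then j₀ else (c i).castPred h

variable {S : Finset α} {c' : α → Fin k} {v : α}

theorem extendColouring_of_mem (hv : v ∈ S) : extendColouring S c' v = Fin.last k :=
  if_pos hv

theorem extendColouring_of_notMem (hv : v ∉ S) : extendColouring S c' v = (c' v).castSucc :=
  if_neg hv

theorem extendColouring_eq_last_iff : extendColouring S c' v = Fin.last k ↔ v ∈ S := by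
  by_cases hv : v ∈ S
  · simp [extendColouring_of_mem hv, hv]
  · simp [extendColouring_of_notMem hv, hv, Fin.castSucc_ne_last]

theorem extendColouring_eq_castSucc_iff {j : Fin k} :
    extendColouring S c' v = j.castSucc ↔ v ∉ S ∧ c' v = j := by
  by_cases hv : v ∈ S
  · simp [extendColouring_of_mem hv, hv, (Fin.castSucc_ne_last j).symm]
  · simp [extendColouring_of_notMem hv, hv]

theorem filter_extendColouring_eq_last {s : Finset α} (hS : S ⊆ s) :
    {v ∈ s | extendColouring S c' v = Fin.last k} = S := by
  simp only [extendColouring_eq_last_iff]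
  exact filter_mem_eq_inter.trans (inter_eq_right.2 hS)

theorem castSucc_lowerColouring {ι : Type*} (j₀ : Fin k) {c : ι → Fin (k + 1)} {i : ι}
    (hi : c i ≠ Fin.last k) : (lowerColouring j₀ c i).castSucc = c i := by
  simp [lowerColouring, hi]

theorem extendColouring_lowerColouring (j₀ : Fin k) {c : α → Fin (k + 1)} {s : Finset α}
    (hv : v ∈ s) :
    extendColouring {v ∈ s | c v = Fin.last k} (lowerColouring j₀ c) v = c v := by
  by_cases hcv : c v = Fin.last k
  · rw [extendColouring_of_mem (mem_filter.2 ⟨hv, hcv⟩), hcv]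
  · have hv' : v ∉ {v ∈ s | c v = Fin.last k} := fun h => hcv (mem_filter.1 h).2
    rw [extendColouring_of_notMem hv', castSucc_lowerColouring j₀ hcv]

theorem image_extendColouring_eq_univ_iff {e : Finset α} (he : (e ∩ S).Nonempty) :
    e.image (extendColouring S c') = univ ↔ (e \ S).image c' = univ := by
  obtain ⟨w, hw⟩ := he
  have hlast : ∃ a ∈ e, extendColouring S c' a = Fin.last k :=
    ⟨w, (mem_inter.1 hw).1, extendColouring_of_mem (mem_inter.1 hw).2⟩
  simp only [eq_univ_iff_forall, Fin.forall_fin_succ', mem_image, hlast, and_true,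
    extendColouring_eq_castSucc_iff, mem_sdiff, and_assoc]

end Colourings

section RainbowFree

variable {k : ℕ} {H : UniformHypergraph α (k + 1)}

theorem isRainbowFree_extendColouring {S : Finset α} {c' : α → Fin k} (hS : S.Nonempty)
    (hSV : S ⊆ H.verts) (hc' : IsRainbowFree (H.induced S) c') :
    IsRainbowFree H (extendColouring S c') := by
  obtain ⟨hsurj, hedges⟩ := hc'
  refine ⟨Fin.forall_fin_succ'.2 ⟨fun j => ?_, ?_⟩, fun e he hrainbow => ?_⟩
  · obtain ⟨v, hv, rfl⟩ := hsurj j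
    rw [induced_verts, mem_sdiff] at hv
    exact ⟨v, hv.1, extendColouring_of_notMem hv.2⟩
  · obtain ⟨v, hv⟩ := hS
    exact ⟨v, hSV hv, extendColouring_of_mem hv⟩
  · have hmeet : (e ∩ S).Nonempty := by
      obtain ⟨w, hw, hwc⟩ := mem_image.1 (hrainbow ▸ mem_univ (Fin.last k))
      exact ⟨w, mem_inter.2 ⟨hw, extendColouring_eq_last_iff.1 hwc⟩⟩
    have hinj : Set.InjOn (extendColouring S c') e :=
      (image_eq_univ_iff_injOn_of_card_eq (by simpa using H.edge_card e he)).1 hrainbow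
    have hone : (e ∩ S).card = 1 := by
      refine le_antisymm (card_le_one.2 fun a ha b hb => ?_) hmeet.card_pos
      rw [mem_inter] at ha hb
      exact hinj ha.1 hb.1 (by rw [extendColouring_of_mem ha.2, extendColouring_of_mem hb.2])
    exact hedges (e \ S) (mem_induced_edges.2 ⟨e, he, hone, rfl⟩)
      ((image_extendColouring_eq_univ_iff hmeet).1 hrainbow)

namespace IsRainbowFree

variable {c : α → Fin (k + 1)}

theorem filter_eq_last_nonempty (hc : IsRainbowFree H c) :
    {v ∈ H.verts | c v = Fin.last k}.Nonempty := by
  obtain ⟨v, hv, hcv⟩ := hc.1 (Fin.last k)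
  exact ⟨v, mem_filter.2 ⟨hv, hcv⟩⟩

theorem filter_eq_last_ssubset (hk : 1 ≤ k) (hc : IsRainbowFree H c) :
    {v ∈ H.verts | c v = Fin.last k} ⊂ H.verts := by
  obtain ⟨v, hv, hcv⟩ := hc.1 (Fin.castSucc ⟨0, hk⟩)
  exact filter_ssubset.2 ⟨v, hv, hcv ▸ Fin.castSucc_ne_last _⟩

theorem induced_lowerColouring (hc : IsRainbowFree H c) (j₀ : Fin k) :
    IsRainbowFree (H.induced {v ∈ H.verts | c v = Fin.last k}) (lowerColouring j₀ c) := by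
  obtain ⟨hsurj, hedges⟩ := hc
  refine ⟨fun j => ?_, fun e he hrainbow => ?_⟩
  · obtain ⟨v, hv, hcv⟩ := hsurj j.castSucc
    have hne : c v ≠ Fin.last k := hcv ▸ Fin.castSucc_ne_last j
    refine ⟨v, mem_sdiff.2 ⟨hv, fun h => hne (mem_filter.1 h).2⟩, ?_⟩
    exact Fin.castSucc_injective _ (by rw [castSucc_lowerColouring j₀ hne, hcv])
  · obtain ⟨f, hf, hone, rfl⟩ := mem_induced_edges.1 he
    refine hedges f hf ?_
    rwa [← image_extendColouring_eq_univ_iff (one_le_card.1 hone.ge),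
      image_congr fun v hv => extendColouring_lowerColouring j₀ (H.edge_sub f hf hv)] at hrainbow

end IsRainbowFree

end RainbowFree

/-- a `(k+1)`-uniform hypergraph (`k + 1 ≥ 2`) is rainbow-free colourable
iff some nonempty proper subset `S` of vertices gives a rainbow-free colourable induced
hypergraph `H_S`; moreover in that case there is a rainbow-free colouring with
`c⁻¹(last) = S`. -/
theorem rainbowFree_colourable_iff_induced {k : ℕ} (hk : 1 ≤ k)
    (H : UniformHypergraph α (k + 1)) :
    ((∃ c : α → Fin (k + 1), IsRainbowFree H c) ↔
      ∃ S : Finset α, S.Nonempty ∧ S ⊂ H.verts ∧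
        ∃ c' : α → Fin k, IsRainbowFree (H.induced S) c') ∧
    (∀ S : Finset α, S.Nonempty → S ⊂ H.verts →
      (∃ c' : α → Fin k, IsRainbowFree (H.induced S) c') →
      ∃ c : α → Fin (k + 1), IsRainbowFree H c ∧
        (H.verts.filter fun v => c v = Fin.last k) = S) := by
  refine ⟨⟨fun ⟨c, hc⟩ => ?_, fun ⟨S, hS, hSV, c', hc'⟩ => ?_⟩, fun S hS hSV ⟨c', hc'⟩ => ?_⟩
  · exact ⟨_, hc.filter_eq_last_nonempty, hc.filter_eq_last_ssubset hk, _,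
      hc.induced_lowerColouring ⟨0, hk⟩⟩
  · exact ⟨_, isRainbowFree_extendColouring hS hSV.subset hc'⟩
  · exact ⟨_, isRainbowFree_extendColouring hS hSV.subset hc',
      filter_extendColouring_eq_last hSV.subset⟩
end

section
/- Let k ≥ 3 and n ≥ k. Let c and c' be two surjective colourings of an n-element set V, each with k-1 singleton colour classes and one class of size n-k+1, such that their large classes overlap in exactly n-k elements. Then the union of the rainbow transversal families of c and c' has cardinality exactly 2(n-k+1) - 1; i.e., the two families of rainbow transversals share exactly one common k-subset. -/
open Finset

/-!
Let `B` be the large class of a colouring of `V` whose other classes are singletons. A rainbow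
`k`-set must contain every vertex outside `B` and one vertex of `B`, so the rainbow transversals
are exactly the complements of the `(|B| - 1)`-subsets of `B`. Taking complements, the theorem
becomes a statement about the `m`-subsets of two `(m + 1)`-sets `B`, `B'` with `|B ∩ B'| = m`:
the only common one is `B ∩ B'`, and each of `B`, `B'` has `m + 1` of them.
-/

section Colouring

variable {V ι : Type*} [Fintype V] [Fintype ι] [DecidableEq ι]

def rainbowTransversals (c : V → ι) : Finset (Finset V) :=
  {e ∈ univ.powersetCard (Fintype.card ι) | ∀ i, ∃ v ∈ e, c v = i}

lemma card_fiber_add_card_eq_of_card_fiber_eq_one {c : V → ι} {j : ι}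
    (hsmall : ∀ i ≠ j, #{v | c v = i} = 1) :
    #{v | c v = j} + Fintype.card ι = Fintype.card V + 1 := by
  have hcompl : #{v | c v ≠ j} = Fintype.card ι - 1 := by
    rw [card_eq_sum_card_fiberwise (f := c) (t := univ.erase j) (by intro v; simp)]
    calc ∑ i ∈ univ.erase j, #{v ∈ {v | c v ≠ j} | c v = i}
        = ∑ i ∈ univ.erase j, 1 := by
          refine sum_congr rfl fun i hi => ?_
          rw [filter_filter, ← hsmall i (ne_of_mem_erase hi)]
          congr 1
          exact filter_congr fun v _ => and_iff_right_of_imp fun h => h ▸ ne_of_mem_erase hi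
      _ = Fintype.card ι - 1 := by simp [card_erase_of_mem]
  have hsplit : #{v | c v = j} + #{v | c v ≠ j} = Fintype.card V :=
    card_filter_add_card_filter_not (s := univ) fun v => c v = j
  have : 0 < Fintype.card ι := Fintype.card_pos_iff.mpr ⟨j⟩
  omega

theorem rainbowTransversals_eq_image_compl [DecidableEq V] {c : V → ι} {j : ι}
    (hsmall : ∀ i ≠ j, #{v | c v = i} = 1) (hcard : Fintype.card ι ≤ Fintype.card V) :
    rainbowTransversals c =
      (({v | c v = j} : Finset V).powersetCard (Fintype.card V - Fintype.card ι)).image compl := by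
  set B : Finset V := {v | c v = j}
  have hB : #B + Fintype.card ι = Fintype.card V + 1 :=
    card_fiber_add_card_eq_of_card_fiber_eq_one hsmall
  have singleton_mem {e : Finset V} {i : ι} (hi : i ≠ j) (he : ∃ v ∈ e, c v = i) {v : V}
      (hv : c v = i) : v ∈ e := by
    obtain ⟨w, hw, rfl⟩ := he
    have := card_le_one.mp (hsmall _ hi).le v (by simp [hv]) w (by simp)
    rwa [this]
  ext e
  rw [rainbowTransversals, mem_filter, mem_powersetCard, mem_image]
  constructor
  · rintro ⟨⟨-, he⟩, hrainbow⟩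
    refine ⟨eᶜ, mem_powersetCard.mpr ⟨fun v hv => ?_, ?_⟩, compl_compl e⟩
    · by_contra hvB
      exact mem_compl.mp hv (singleton_mem (by simpa [B] using hvB) (hrainbow _) rfl)
    · rw [card_compl, he]
  · rintro ⟨s, hs, rfl⟩
    obtain ⟨hsB, hs⟩ := mem_powersetCard.mp hs
    refine ⟨⟨subset_univ _, by rw [card_compl]; omega⟩, fun i => ?_⟩
    by_cases hij : i = j
    · obtain ⟨b, hb, hbs⟩ := exists_mem_notMem_of_card_lt_card (s := s) (t := B) (by omega)
      exact ⟨b, mem_compl.mpr hbs, by simpa [B, hij] using hb⟩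
    · obtain ⟨w, hw⟩ := card_eq_one.mp (hsmall i hij)
      have hcw : c w = i := by
        have : w ∈ ({v | c v = i} : Finset V) := hw ▸ mem_singleton_self w
        simpa using this
      exact ⟨w, mem_compl.mpr fun hws => hij (by simpa [B, hcw] using hsB hws), hcw⟩

end Colouring

section PowersetCard

variable {α : Type*} [DecidableEq α]

lemma powersetCard_inter (m : ℕ) (s t : Finset α) :
    powersetCard m (s ∩ t) = powersetCard m s ∩ powersetCard m t := by
  ext u
  simp only [mem_inter, mem_powersetCard, subset_inter_iff]
  tauto

lemma card_powersetCard_union_and_inter_of_card_inter {s t : Finset α} {m : ℕ}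
    (hs : #s = m + 1) (ht : #t = m + 1) (hst : #(s ∩ t) = m) :
    #(powersetCard m s ∪ powersetCard m t) = 2 * (m + 1) - 1 ∧
      #(powersetCard m s ∩ powersetCard m t) = 1 := by
  have hinter : #(powersetCard m s ∩ powersetCard m t) = 1 := by
    rw [← powersetCard_inter, card_powersetCard, hst, Nat.choose_self]
  have := card_union_add_card_inter (powersetCard m s) (powersetCard m t)
  rw [card_powersetCard, card_powersetCard, hs, ht, Nat.choose_succ_self_right] at this
  omega

end PowersetCard

section LastClassLarge

variable {V : Type*} [Fintype V] {k : ℕ} {c : V → Fin k}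

lemma filter_val_eq_pred (hk : 0 < k) :
    ({v | (c v : ℕ) = k - 1} : Finset V) = ({v | c v = ⟨k - 1, by omega⟩} : Finset V) := by
  simp [Fin.ext_iff]

lemma card_fiber_eq_one_of_ne_last (hk : 0 < k)
    (hsmall : ∀ i : Fin k, (i : ℕ) < k - 1 → #{v | c v = i} = 1) :
    ∀ i ≠ (⟨k - 1, by omega⟩ : Fin k), #{v | c v = i} = 1 := fun i hi =>
  hsmall i (by have := i.isLt; have : (i : ℕ) ≠ k - 1 := fun h => hi (Fin.ext h); omega)

lemma card_filter_val_eq_pred (hk : 0 < k)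
    (hsmall : ∀ i : Fin k, (i : ℕ) < k - 1 → #{v | c v = i} = 1) :
    #({v | (c v : ℕ) = k - 1} : Finset V) = Fintype.card V + 1 - k := by
  have := card_fiber_add_card_eq_of_card_fiber_eq_one (card_fiber_eq_one_of_ne_last hk hsmall)
  rw [Fintype.card_fin, ← filter_val_eq_pred hk] at this
  omega

lemma filter_rainbow_eq_image_compl [DecidableEq V] (hk : 0 < k) (hkV : k ≤ Fintype.card V)
    (hsmall : ∀ i : Fin k, (i : ℕ) < k - 1 → #{v | c v = i} = 1) :
    {e ∈ (univ : Finset V).powersetCard k | ∀ i : Fin k, ∃ v ∈ e, c v = i} =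
      (({v | (c v : ℕ) = k - 1} : Finset V).powersetCard (Fintype.card V - k)).image compl := by
  have := rainbowTransversals_eq_image_compl (card_fiber_eq_one_of_ne_last hk hsmall)
    (by rwa [Fintype.card_fin])
  rw [rainbowTransversals, Fintype.card_fin] at this
  rw [filter_val_eq_pred hk]
  convert this

end LastClassLarge

theorem card_union_rainbow_transversals_general {V : Type*} [Fintype V] [DecidableEq V]
    {k n : ℕ} (hk : 3 ≤ k) (hn : k ≤ n) (hV : Fintype.card V = n)
    (c c' : V → Fin k)
    (hsmall : ∀ i : Fin k, (i : ℕ) < k - 1 →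
      (Finset.univ.filter fun v => c v = i).card = 1)
    (hsmall' : ∀ i : Fin k, (i : ℕ) < k - 1 →
      (Finset.univ.filter fun v => c' v = i).card = 1)
    (hoverlap : ((Finset.univ.filter fun v => (c v : ℕ) = k - 1) ∩
      (Finset.univ.filter fun v => (c' v : ℕ) = k - 1)).card = n - k) :
    (((Finset.univ.powersetCard k).filter fun e : Finset V =>
        ∀ i : Fin k, ∃ v ∈ e, c v = i) ∪
      ((Finset.univ.powersetCard k).filter fun e : Finset V =>
        ∀ i : Fin k, ∃ v ∈ e, c' v = i)).card = 2 * (n - k + 1) - 1 ∧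
    (((Finset.univ.powersetCard k).filter fun e : Finset V =>
        ∀ i : Fin k, ∃ v ∈ e, c v = i) ∩
      ((Finset.univ.powersetCard k).filter fun e : Finset V =>
        ∀ i : Fin k, ∃ v ∈ e, c' v = i)).card = 1 := by
  subst hV
  have hk0 : 0 < k := by omega
  rw [filter_rainbow_eq_image_compl hk0 hn hsmall, filter_rainbow_eq_image_compl hk0 hn hsmall',
    ← image_union, ← image_inter _ _ compl_injective, card_image_of_injective _ compl_injective,
    card_image_of_injective _ compl_injective]
  refine card_powersetCard_union_and_inter_of_card_inter ?_ ?_ hoverlap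
  · rw [card_filter_val_eq_pred hk0 hsmall]; omega
  · rw [card_filter_val_eq_pred hk0 hsmall']; omega

/-- for two colourings of an `n`-set, each with `k - 1` singleton colour
classes and one large class of size `n - k + 1`, whose large classes overlap in exactly
`n - k` elements, the union of their families of rainbow transversals has exactly
`2(n - k + 1) - 1` members; equivalently, the two families share exactly one `k`-subset. -/
theorem card_union_rainbow_transversals {V : Type*} [Fintype V] [DecidableEq V]
    {k n : ℕ} (hk : 3 ≤ k) (hn : k ≤ n) (hV : Fintype.card V = n)
    (c c' : V → Fin k)
    (hsmall : ∀ i : Fin k, (i : ℕ) < k - 1 →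
      (Finset.univ.filter fun v => c v = i).card = 1)
    (hbig : ∀ i : Fin k, (i : ℕ) = k - 1 →
      (Finset.univ.filter fun v => c v = i).card = n - k + 1)
    (hsmall' : ∀ i : Fin k, (i : ℕ) < k - 1 →
      (Finset.univ.filter fun v => c' v = i).card = 1)
    (hbig' : ∀ i : Fin k, (i : ℕ) = k - 1 →
      (Finset.univ.filter fun v => c' v = i).card = n - k + 1)
    (hoverlap : ((Finset.univ.filter fun v => (c v : ℕ) = k - 1) ∩
      (Finset.univ.filter fun v => (c' v : ℕ) = k - 1)).card = n - k) :
    (((Finset.univ.powersetCard k).filter fun e : Finset V =>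
        ∀ i : Fin k, ∃ v ∈ e, c v = i) ∪
      ((Finset.univ.powersetCard k).filter fun e : Finset V =>
        ∀ i : Fin k, ∃ v ∈ e, c' v = i)).card = 2 * (n - k + 1) - 1 ∧
    (((Finset.univ.powersetCard k).filter fun e : Finset V =>
        ∀ i : Fin k, ∃ v ∈ e, c v = i) ∩
      ((Finset.univ.powersetCard k).filter fun e : Finset V =>
        ∀ i : Fin k, ∃ v ∈ e, c' v = i)).card = 1 :=
  card_union_rainbow_transversals_general hk hn hV c c' hsmall hsmall' hoverlap
end
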